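/- arXiv:math-ph/9903002 — 4 statements merged into one kernel-verified Lean document; each statement's English description precedes it below -/
import Mathlib

section
/- Let Λ be a finite set with |Λ| ≥ 2. Let {x_A : A ⊆ Λ} be real numbers with x_∅ = 0 and ∑_{B⊆A} x_B ≥ 0 for every A ⊆ Λ, and let {y_a : a ∈ Λ} ⊆ [0,1], with y_A := ∏_{a∈A} y_a (and y_∅ = 1). Then ∑_{A⊆Λ} x_A y_A (1 − y_{Λ∖A}) ≥ ∑_{a∈Λ} x_{{a}} y_a ∏_{b∈Λ∖{a}} (1 − y_b) ≥ 0. -/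
/-!
Let `R` be a random subset of `Λ` containing each `a` independently with probability `y a`,
and `S C = ∑ B ⊆ C, x B ≥ 0`. Then `∏ a ∈ A, y a = P(A ⊆ R)`, so `∑ A, x A y_A = E[S R]` and
the left-hand side equals `E[S R; R ≠ Λ]`. Since `x ∅ = 0`, the middle sum is the part
`∑ a, P(R = {a}) S {a}` of this expectation, and every term is nonnegative.
-/

open Finset

namespace Finset

variable {α : Type*} [DecidableEq α]

/-- `P(R = C)` for the random subset `R ⊆ Λ` containing each `a` independently with
probability `y a`. -/
def subsetWeight (Λ : Finset α) (y : α → ℝ) (C : Finset α) : ℝ :=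
  (∏ a ∈ C, y a) * ∏ b ∈ Λ \ C, (1 - y b)

lemma subsetWeight_self (Λ : Finset α) (y : α → ℝ) :
    subsetWeight Λ y Λ = ∏ a ∈ Λ, y a := by
  simp [subsetWeight]

lemma subsetWeight_singleton (Λ : Finset α) (y : α → ℝ) (a : α) :
    subsetWeight Λ y {a} = y a * ∏ b ∈ Λ \ {a}, (1 - y b) := by
  rw [subsetWeight, prod_singleton]

lemma subsetWeight_nonneg {Λ C : Finset α} {y : α → ℝ} (hy : ∀ a ∈ Λ, y a ∈ Set.Icc (0 : ℝ) 1)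
    (hC : C ⊆ Λ) : 0 ≤ subsetWeight Λ y C :=
  mul_nonneg (prod_nonneg fun a ha => (hy a (hC ha)).1)
    (prod_nonneg fun b hb => sub_nonneg.2 (hy b (mem_sdiff.1 hb).1).2)

lemma prod_eq_sum_subsetWeight {Λ B : Finset α} (y : α → ℝ) (hB : B ⊆ Λ) :
    ∏ a ∈ B, y a = ∑ C ∈ Λ.powerset, if B ⊆ C then subsetWeight Λ y C else 0 := by
  -- replacing the factor `1 - y b` by `0` for `b ∈ B` kills exactly the terms with `¬ B ⊆ C`
  have hexpand := prod_add y (fun b => if b ∈ B then 0 else 1 - y b) Λ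
  have hleft : ∏ a ∈ Λ, (y a + if a ∈ B then 0 else 1 - y a) = ∏ a ∈ B, y a :=
    calc _ = ∏ a ∈ Λ, if a ∈ B then y a else 1 := prod_congr rfl fun a _ => by split_ifs <;> ring
      _ = _ := by rw [prod_ite_mem, inter_eq_right.2 hB]
  rw [← hleft, hexpand]
  refine sum_congr rfl fun C hC => ?_
  split_ifs with hBC
  · rw [subsetWeight]
    congr 1
    exact prod_congr rfl fun b hb => if_neg fun hbB => (mem_sdiff.1 hb).2 (hBC hbB)
  · obtain ⟨b, hbB, hbC⟩ := not_subset.1 hBC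
    exact mul_eq_zero_of_right _ (prod_eq_zero (mem_sdiff.2 ⟨hB hbB, hbC⟩) (if_pos hbB))

lemma sum_powerset_singleton {M : Type*} [AddCommMonoid M] (x : Finset α → M) (a : α) :
    ∑ B ∈ ({a} : Finset α).powerset, x B = x ∅ + x {a} := by
  rw [← insert_empty_eq, sum_powerset_insert (notMem_empty a)]
  simp

lemma sum_mul_prod_eq_sum_subsetWeight_mul (Λ : Finset α) (x : Finset α → ℝ) (y : α → ℝ) :
    ∑ B ∈ Λ.powerset, x B * ∏ a ∈ B, y a
      = ∑ C ∈ Λ.powerset, subsetWeight Λ y C * ∑ B ∈ C.powerset, x B := by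
  have hpowerset : ∀ C ∈ Λ.powerset, C.powerset = Λ.powerset.filter (· ⊆ C) := fun C hC => by
    ext B
    simp only [mem_powerset, mem_filter]
    exact ⟨fun hBC => ⟨hBC.trans (mem_powerset.1 hC), hBC⟩, And.right⟩
  calc ∑ B ∈ Λ.powerset, x B * ∏ a ∈ B, y a
      = ∑ B ∈ Λ.powerset, ∑ C ∈ Λ.powerset, if B ⊆ C then subsetWeight Λ y C * x B else 0 := by
        refine sum_congr rfl fun B hB => ?_
        rw [prod_eq_sum_subsetWeight y (mem_powerset.1 hB), mul_sum]
        refine sum_congr rfl fun C _ => ?_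
        split_ifs <;> ring
    _ = ∑ C ∈ Λ.powerset, subsetWeight Λ y C * ∑ B ∈ C.powerset, x B := by
        rw [sum_comm]
        refine sum_congr rfl fun C hC => ?_
        rw [hpowerset C hC, sum_filter, mul_sum]
        simp only [mul_ite, mul_zero]

lemma sum_mul_prod_mul_one_sub_prod_eq (Λ : Finset α) (x : Finset α → ℝ) (y : α → ℝ) :
    ∑ A ∈ Λ.powerset, x A * (∏ a ∈ A, y a) * (1 - ∏ b ∈ Λ \ A, y b)
      = ∑ C ∈ Λ.powerset.erase Λ, subsetWeight Λ y C * ∑ B ∈ C.powerset, x B := by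
  have hterm : ∀ A ∈ Λ.powerset, x A * (∏ a ∈ A, y a) * (1 - ∏ b ∈ Λ \ A, y b)
      = x A * ∏ a ∈ A, y a - x A * ∏ a ∈ Λ, y a := fun A hA => by
    rw [← prod_sdiff (mem_powerset.1 hA)]
    ring
  rw [sum_congr rfl hterm, sum_sub_distrib, ← sum_mul, sum_mul_prod_eq_sum_subsetWeight_mul,
    ← sum_erase_add _ _ (mem_powerset_self Λ), subsetWeight_self]
  ring

end Finset

/-- Inequality (ineq1) of Lemma 2: for a finite set `Λ` with `|Λ| ≥ 2`, coefficients
`x_A` (for `A ⊆ Λ`) with `x_∅ = 0` and `∑_{B ⊆ A} x_B ≥ 0` for all `A ⊆ Λ`, and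
`y_a ∈ [0,1]` for `a ∈ Λ`, with `y_A = ∏_{a ∈ A} y_a`,
`∑_{A ⊆ Λ} x_A y_A (1 - y_{Λ∖A}) ≥ ∑_{a ∈ Λ} x_{{a}} y_a ∏_{b ∈ Λ∖{a}} (1 - y_b) ≥ 0`. -/
theorem stretched_exp_lemma2_ineq1 {α : Type*} [DecidableEq α] (Λ : Finset α)
    (hΛ : 2 ≤ Λ.card) (x : Finset α → ℝ) (y : α → ℝ)
    (hx0 : x ∅ = 0)
    (hx : ∀ A ⊆ Λ, 0 ≤ ∑ B ∈ A.powerset, x B)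
    (hy : ∀ a ∈ Λ, y a ∈ Set.Icc (0 : ℝ) 1) :
    ∑ A ∈ Λ.powerset, x A * (∏ a ∈ A, y a) * (1 - ∏ b ∈ Λ \ A, y b)
        ≥ ∑ a ∈ Λ, x {a} * y a * ∏ b ∈ Λ \ {a}, (1 - y b) ∧
      0 ≤ ∑ a ∈ Λ, x {a} * y a * ∏ b ∈ Λ \ {a}, (1 - y b) := by
  have hterm_nonneg : ∀ C ∈ Λ.powerset, 0 ≤ subsetWeight Λ y C * ∑ B ∈ C.powerset, x B :=
    fun C hC => mul_nonneg (subsetWeight_nonneg hy (mem_powerset.1 hC)) (hx C (mem_powerset.1 hC))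
  have hsingletons : ∑ a ∈ Λ, x {a} * y a * ∏ b ∈ Λ \ {a}, (1 - y b)
      = ∑ C ∈ Λ.image singleton, subsetWeight Λ y C * ∑ B ∈ C.powerset, x B := by
    rw [sum_image fun a _ b _ => singleton_inj.1]
    refine sum_congr rfl fun a _ => ?_
    rw [subsetWeight_singleton, sum_powerset_singleton, hx0, zero_add]
    ring
  have hsub : Λ.image singleton ⊆ Λ.powerset.erase Λ := by
    intro C hC
    obtain ⟨a, ha, rfl⟩ := mem_image.1 hC
    refine mem_erase.2 ⟨fun h => ?_, mem_powerset.2 (singleton_subset_iff.2 ha)⟩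
    rw [← h, card_singleton] at hΛ
    omega
  refine ⟨?_, ?_⟩
  · rw [sum_mul_prod_mul_one_sub_prod_eq, hsingletons]
    exact sum_le_sum_of_subset_of_nonneg hsub fun C hC _ => hterm_nonneg C (mem_of_mem_erase hC)
  · rw [hsingletons]
    exact sum_nonneg fun C hC => hterm_nonneg C (hsub.trans (erase_subset _ _) hC)
end

section
/- Let Λ be a finite nonempty set. Let {x_A : A ⊆ Λ} be real numbers with x_∅ = 0 and ∑_{B⊆A} x_B ≥ 0 for every A ⊆ Λ, and let {y_a : a ∈ Λ} ⊆ [0,1], with y_A := ∏_{a∈A} y_a (and y_∅ = 1). Then ∑_{A⊆Λ} x_A y_A ≥ (∑_{A⊆Λ} x_A) · y_Λ. -/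
/-!
Induct on `Λ`. Removing a point `a` and absorbing `y a` into the coefficients,
`x' B = x B + y a * x (insert a B)`, turns the left side over `insert a s` into the left side
for `x'` over `s`. The partial sums of `x'` are convex combinations `(1 - y a) S_A + y a S_{A ∪ {a}}`
of partial sums of `x`, so they stay nonnegative, and the right side for `x` over `insert a s`
falls short of the right side for `x'` over `s` by `(1 - y a) S_s y_s ≥ 0`.
-/

open Finset

section

variable {α : Type*} [DecidableEq α]

lemma sum_powerset_insert_mul_prod {s : Finset α} {a : α} (ha : a ∉ s)
    (x : Finset α → ℝ) (y : α → ℝ) :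
    ∑ A ∈ (insert a s).powerset, x A * ∏ b ∈ A, y b
      = ∑ B ∈ s.powerset, (x B + y a * x (insert a B)) * ∏ b ∈ B, y b := by
  rw [sum_powerset_insert ha, ← sum_add_distrib]
  refine sum_congr rfl fun B hB => ?_
  rw [prod_insert fun h => ha (mem_powerset.mp hB h)]
  ring

lemma sum_powerset_absorb (A : Finset α) (a : α) (x : Finset α → ℝ) (t : ℝ) :
    ∑ B ∈ A.powerset, (x B + t * x (insert a B))
      = ∑ B ∈ A.powerset, x B + t * ∑ B ∈ A.powerset, x (insert a B) := by
  rw [sum_add_distrib, mul_sum]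

lemma sum_powerset_absorb_nonneg {s : Finset α} {a : α} (ha : a ∉ s) {x : Finset α → ℝ}
    (hx : ∀ A ⊆ insert a s, 0 ≤ ∑ B ∈ A.powerset, x B) {t : ℝ} (ht : t ∈ Set.Icc (0 : ℝ) 1) :
    ∀ A ⊆ s, 0 ≤ ∑ B ∈ A.powerset, (x B + t * x (insert a B)) := by
  intro A hA
  have hS := hx A (hA.trans (subset_insert a s))
  have hS' := hx (insert a A) (insert_subset_insert a hA)
  rw [sum_powerset_insert fun h => ha (hA h)] at hS'
  rw [sum_powerset_absorb]
  nlinarith [ht.1, ht.2]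

theorem sum_powerset_mul_prod_le {Λ : Finset α} {x : Finset α → ℝ} {y : α → ℝ}
    (hx : ∀ A ⊆ Λ, 0 ≤ ∑ B ∈ A.powerset, x B) (hy : ∀ a ∈ Λ, y a ∈ Set.Icc (0 : ℝ) 1) :
    (∑ A ∈ Λ.powerset, x A) * ∏ a ∈ Λ, y a ≤ ∑ A ∈ Λ.powerset, x A * ∏ a ∈ A, y a := by
  induction Λ using Finset.induction_on generalizing x with
  | empty => simp
  | @insert a s ha ih =>
    have hya := hy a (mem_insert_self a s)
    have hys : ∀ b ∈ s, y b ∈ Set.Icc (0 : ℝ) 1 := fun b hb => hy b (mem_insert_of_mem hb)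
    have hP : 0 ≤ ∏ b ∈ s, y b := prod_nonneg fun b hb => (hys b hb).1
    have hS : 0 ≤ ∑ B ∈ s.powerset, x B := hx s (subset_insert a s)
    have key := ih (sum_powerset_absorb_nonneg ha hx hya) hys
    rw [sum_powerset_absorb] at key
    rw [sum_powerset_insert_mul_prod ha, sum_powerset_insert ha, prod_insert ha]
    calc (∑ B ∈ s.powerset, x B + ∑ B ∈ s.powerset, x (insert a B)) * (y a * ∏ b ∈ s, y b)
        ≤ (∑ B ∈ s.powerset, x B + y a * ∑ B ∈ s.powerset, x (insert a B)) * ∏ b ∈ s, y b := by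
          nlinarith [mul_nonneg (mul_nonneg hS (sub_nonneg.mpr hya.2)) hP]
      _ ≤ _ := key

end

theorem stretched_exp_lemma2_ineq2_general {α : Type*} [DecidableEq α] (Λ : Finset α)
    (x : Finset α → ℝ) (y : α → ℝ)
    (hx : ∀ A ⊆ Λ, 0 ≤ ∑ B ∈ A.powerset, x B)
    (hy : ∀ a ∈ Λ, y a ∈ Set.Icc (0 : ℝ) 1) :
    ∑ A ∈ Λ.powerset, x A * ∏ a ∈ A, y a
      ≥ (∑ A ∈ Λ.powerset, x A) * ∏ a ∈ Λ, y a :=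
  sum_powerset_mul_prod_le hx hy

/-- Inequality (ineq2) of Lemma 2: for a finite nonempty set `Λ`, coefficients
`x_A` (for `A ⊆ Λ`) with `x_∅ = 0` and `∑_{B ⊆ A} x_B ≥ 0` for all `A ⊆ Λ`, and
`y_a ∈ [0,1]` for `a ∈ Λ`, with `y_A = ∏_{a ∈ A} y_a`,
`∑_{A ⊆ Λ} x_A y_A ≥ (∑_{A ⊆ Λ} x_A) · y_Λ`. -/
theorem stretched_exp_lemma2_ineq2 {α : Type*} [DecidableEq α] (Λ : Finset α)
    (hΛ : Λ.Nonempty) (x : Finset α → ℝ) (y : α → ℝ)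
    (hx0 : x ∅ = 0)
    (hx : ∀ A ⊆ Λ, 0 ≤ ∑ B ∈ A.powerset, x B)
    (hy : ∀ a ∈ Λ, y a ∈ Set.Icc (0 : ℝ) 1) :
    ∑ A ∈ Λ.powerset, x A * ∏ a ∈ A, y a
      ≥ (∑ A ∈ Λ.powerset, x A) * ∏ a ∈ Λ, y a :=
  stretched_exp_lemma2_ineq2_general Λ x y hx hy
end

section
/- Let Λ be a finite set. Let {x_A : A ⊆ Λ} be real numbers with x_∅ = 0, let {y_a : a ∈ Λ} be real numbers, and set y_A := ∏_{a∈A} y_a (with y_∅ = 1) and z_B := ∑_{C⊆B} x_C for B ⊆ Λ. Then ∑_{A⊆Λ} x_A y_A (1 − y_{Λ∖A}) = ∑_{B : ∅ ≠ B ⊊ Λ} z_B y_B ∏_{a∈Λ∖B} (1 − y_a), where the sum on the right is over nonempty proper subsets B of Λ. -/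
/-!
Write `p_B = y_B ∏_{a ∈ Λ∖B} (1 - y_a)`. Expanding `∏_{a ∈ Λ∖C} (y_a + (1 - y_a)) = 1` shows
`∑_{C ⊆ B ⊆ Λ} p_B = y_C`, so exchanging the order of summation gives
`∑_{B ⊆ Λ} z_B p_B = ∑_{C ⊆ Λ} x_C y_C`. The left-hand side of the identity is this sum minus
`z_Λ y_Λ = z_Λ p_Λ`, and the term `z_∅ p_∅` vanishes because `x_∅ = 0`.
-/

namespace Finset

variable {α R : Type*} [DecidableEq α] [CommRing R]

theorem sum_powerset_prod_mul_prod_sdiff_one_sub (s : Finset α) (y : α → R) :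
    ∑ t ∈ s.powerset, (∏ a ∈ t, y a) * ∏ a ∈ s \ t, (1 - y a) = 1 := by
  rw [← prod_add]
  simp

theorem sum_Icc_prod_mul_prod_sdiff_one_sub {s t : Finset α} (hst : s ⊆ t) (y : α → R) :
    ∑ u ∈ Icc s t, (∏ a ∈ u, y a) * ∏ a ∈ t \ u, (1 - y a) = ∏ a ∈ s, y a := by
  have hinj : ∀ v ∈ (t \ s).powerset, ∀ w ∈ (t \ s).powerset, s ∪ v = s ∪ w → v = w := by
    intro v hv w hw h
    have hdisj : ∀ u ∈ (t \ s).powerset, Disjoint s u := fun u hu =>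
      disjoint_sdiff.mono_right (mem_powerset.mp hu)
    rw [← union_sdiff_cancel_left (hdisj v hv), h, union_sdiff_cancel_left (hdisj w hw)]
  rw [Icc_eq_image_powerset hst, sum_image hinj]
  calc ∑ v ∈ (t \ s).powerset, (∏ a ∈ s ∪ v, y a) * ∏ a ∈ t \ (s ∪ v), (1 - y a)
      = ∑ v ∈ (t \ s).powerset,
          (∏ a ∈ s, y a) * ((∏ a ∈ v, y a) * ∏ a ∈ (t \ s) \ v, (1 - y a)) := by
        refine sum_congr rfl fun v hv => ?_
        rw [prod_union (disjoint_sdiff.mono_right (mem_powerset.mp hv)), sdiff_sdiff_left,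
          sup_eq_union]
        ring
    _ = ∏ a ∈ s, y a := by
        rw [← mul_sum, sum_powerset_prod_mul_prod_sdiff_one_sub, mul_one]

theorem sum_powerset_sum_powerset_comm {M : Type*} [AddCommMonoid M] (t : Finset α)
    (f : Finset α → Finset α → M) :
    ∑ u ∈ t.powerset, ∑ s ∈ u.powerset, f u s = ∑ s ∈ t.powerset, ∑ u ∈ Icc s t, f u s :=
  sum_comm' fun u s => by
    simp only [mem_powerset, mem_Icc]
    exact ⟨fun ⟨hut, hsu⟩ => ⟨⟨hsu, hut⟩, hsu.trans hut⟩, fun ⟨h, _⟩ => h.symm⟩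

theorem sum_powerset_sum_powerset_mul_prod_mul_prod_sdiff_one_sub (t : Finset α)
    (x : Finset α → R) (y : α → R) :
    ∑ u ∈ t.powerset, (∑ s ∈ u.powerset, x s) * ((∏ a ∈ u, y a) * ∏ a ∈ t \ u, (1 - y a))
      = ∑ s ∈ t.powerset, x s * ∏ a ∈ s, y a := by
  simp_rw [sum_mul]
  rw [sum_powerset_sum_powerset_comm]
  refine sum_congr rfl fun s hs => ?_
  rw [← mul_sum, sum_Icc_prod_mul_prod_sdiff_one_sub (mem_powerset.mp hs)]

theorem sum_filter_powerset_ne_empty_ne_self {M : Type*} [AddCommGroup M] (t : Finset α)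
    (g : Finset α → M) (hg : g ∅ = 0) :
    ∑ u ∈ t.powerset.filter (fun u => u ≠ ∅ ∧ u ≠ t), g u = ∑ u ∈ t.powerset, g u - g t := by
  rw [← sum_erase_eq_sub (mem_powerset_self t),
    ← sum_filter_of_ne (s := t.powerset.erase t) (p := (· ≠ ∅))
      fun u _ hu => by rintro rfl; exact hu hg]
  congr 1
  ext u
  simp only [mem_filter, mem_erase, mem_powerset]
  tauto

end Finset

open Finset

/-- The key algebraic identity in the proof of Lemma 2: with `x_∅ = 0`,
`z_B = ∑_{C ⊆ B} x_C` and `y_A = ∏_{a ∈ A} y_a`,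
`∑_{A ⊆ Λ} x_A y_A (1 - y_{Λ∖A}) = ∑_{∅ ≠ B ⊊ Λ} z_B y_B ∏_{a ∈ Λ∖B} (1 - y_a)`. -/
theorem stretched_exp_lemma2_identity {α : Type*} [DecidableEq α] (Λ : Finset α)
    (x : Finset α → ℝ) (y : α → ℝ) (hx0 : x ∅ = 0)
    (z : Finset α → ℝ) (hz : ∀ B ⊆ Λ, z B = ∑ C ∈ B.powerset, x C) :
    ∑ A ∈ Λ.powerset, x A * (∏ a ∈ A, y a) * (1 - ∏ b ∈ Λ \ A, y b)
      = ∑ B ∈ Λ.powerset.filter (fun B => B ≠ ∅ ∧ B ≠ Λ),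
          z B * (∏ a ∈ B, y a) * ∏ a ∈ Λ \ B, (1 - y a) := by
  set g : Finset α → ℝ := fun B =>
    (∑ C ∈ B.powerset, x C) * ((∏ a ∈ B, y a) * ∏ a ∈ Λ \ B, (1 - y a))
  calc ∑ A ∈ Λ.powerset, x A * (∏ a ∈ A, y a) * (1 - ∏ b ∈ Λ \ A, y b)
      = ∑ A ∈ Λ.powerset, x A * ∏ a ∈ A, y a - (∑ A ∈ Λ.powerset, x A) * ∏ a ∈ Λ, y a := by
        rw [sum_mul, ← sum_sub_distrib]
        refine sum_congr rfl fun A hA => ?_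
        rw [← prod_sdiff (mem_powerset.mp hA)]
        ring
    _ = ∑ B ∈ Λ.powerset, g B - g Λ := by
        rw [sum_powerset_sum_powerset_mul_prod_mul_prod_sdiff_one_sub]
        simp [g]
    _ = ∑ B ∈ Λ.powerset.filter (fun B => B ≠ ∅ ∧ B ≠ Λ), g B :=
        (sum_filter_powerset_ne_empty_ne_self Λ g (by simp [g, hx0])).symm
    _ = _ := sum_congr rfl fun B hB => by
        rw [hz B (mem_powerset.mp (mem_filter.mp hB).1)]
        ring
end

section
/- Let Λ be a finite set and let f̂ : {A : A ⊆ Λ} → ℝ. Define f : {0,1}^Λ → ℝ by f(η) = ∑_{A⊆Λ} f̂(A) ∏_{x∈A} η(x) (empty product = 1). Then f is monotone with respect to the pointwise partial order on {0,1}^Λ (η ≤ ζ iff η(x) ≤ ζ(x) for all x ∈ Λ) if and only if for every pair of subsets B₁ ⊆ B₂ ⊆ Λ one has ∑_{A ⊆ B₂, A ∩ (B₂∖B₁) ≠ ∅} f̂(A) ≥ 0. -/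
/-!
Writing `g B = ∑_{A ⊆ B} f̂(A)`, one has `f(η) = g({x | η x})`, and for `B₁ ⊆ B₂` the sets
`A ⊆ B₂` meeting `B₂ \ B₁` are exactly those of `𝒫 B₂ \ 𝒫 B₁`, so the sum in the criterion is
`g B₂ - g B₁`. Since `η ↦ {x | η x}` is an order isomorphism `{0,1}^Λ ≃ 𝒫 Λ`, monotonicity of `f`
is monotonicity of `g` for inclusion.
-/

open Finset

section

variable {ι : Type*} [Fintype ι]

theorem Finset.sum_mul_prod_boole_eq_sum_powerset {R : Type*} [CommSemiring R]
    (c : Finset ι → R) (η : ι → Bool) :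
    ∑ A : Finset ι, c A * ∏ x ∈ A, (if η x then (1 : R) else 0)
      = ∑ A ∈ (univ.filter (η ·)).powerset, c A := by
  simp_rw [prod_boole, mul_ite, mul_one, mul_zero, ← sum_filter]
  congr 1
  ext A
  simp [subset_iff]

theorem Finset.filter_powerset_inter_sdiff_nonempty {α : Type*} [DecidableEq α]
    {B₁ B₂ : Finset α} (h : B₁ ⊆ B₂) :
    B₂.powerset.filter (fun A => (A ∩ (B₂ \ B₁)).Nonempty) = B₂.powerset \ B₁.powerset := by
  ext A
  simp only [mem_filter, mem_sdiff, mem_powerset, and_congr_right_iff]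
  intro hA
  rw [← not_disjoint_iff_nonempty_inter, disjoint_sdiff_iff_le hA h]

theorem monotone_comp_filter_univ_iff [DecidableEq ι] {β : Type*} [Preorder β] {g : Finset ι → β} :
    Monotone (fun η : ι → Bool => g (univ.filter (η ·))) ↔ Monotone g := by
  refine ⟨fun hg B₁ B₂ h => ?_, fun hg η ζ h => hg fun x => ?_⟩
  · simpa using @hg (· ∈ B₁) (· ∈ B₂) fun x => by simpa [Bool.le_iff_imp] using @h x
  · simpa [Bool.le_iff_imp] using @h x

end

/-- Lemma 1 of the paper (on the finite configuration space `{0,1}^Λ`, with `Λ` the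
finite index type `ι`): the function `f(η) = ∑_{A ⊆ Λ} f̂(A) ∏_{x ∈ A} η(x)` is
monotone for the pointwise partial order on `{0,1}^Λ` if and only if
`∑_{A ⊆ B₂, A ∩ (B₂∖B₁) ≠ ∅} f̂(A) ≥ 0` for all `B₁ ⊆ B₂ ⊆ Λ`. -/
theorem stretched_exp_lemma1 {ι : Type*} [Fintype ι] [DecidableEq ι]
    (fhat : Finset ι → ℝ) (f : (ι → Bool) → ℝ)
    (hf : ∀ η, f η = ∑ A : Finset ι, fhat A * ∏ x ∈ A, (if η x then (1 : ℝ) else 0)) :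
    (∀ η ζ : ι → Bool, (∀ x, η x ≤ ζ x) → f η ≤ f ζ) ↔
      ∀ B₁ B₂ : Finset ι, B₁ ⊆ B₂ →
        0 ≤ ∑ A ∈ B₂.powerset.filter (fun A => (A ∩ (B₂ \ B₁)).Nonempty), fhat A := by
  obtain rfl : f = fun η => ∑ A ∈ (univ.filter (η ·)).powerset, fhat A :=
    funext fun η => (hf η).trans (sum_mul_prod_boole_eq_sum_powerset fhat η)
  refine (monotone_comp_filter_univ_iff (g := fun B => ∑ A ∈ B.powerset, fhat A)).trans <|
    forall₂_congr fun B₁ B₂ => forall_congr' fun h => ?_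
  rw [filter_powerset_inter_sdiff_nonempty h, sum_sdiff_eq_sub (powerset_mono.mpr h), sub_nonneg]
end
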